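/- Let K ∈ ℝ with K ≠ 0. Then there do not exist smooth functions f : I → ℝ and g : J → ℝ on open intervals such that for all (y,z) ∈ I × J: 1 + f(y)²·g'(z)² − f'(y)²·g(z)² < 0 and f(y)·g(z)·f''(y)·g''(z) − f'(y)²·g'(z)² = −K · ( 1 + f(y)²·g'(z)² − f'(y)²·g(z)² )². In other words, in Lorentz–Minkowski space there is no timelike homothetical surface x = f(y)g(z) with nonzero constant Gauss curvature. -/

import Mathlib

noncomputable def vec7 (x : Fin 7 → ℝ) : EuclideanSpace ℝ (Fin 7) :=
  (WithLp.linearEquiv 2 ℝ (Fin 7 → ℝ)).symm x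

noncomputable def proj47 (emb : Fin 4 → Fin 7) :
    EuclideanSpace ℝ (Fin 7) →ₗ[ℝ] EuclideanSpace ℝ (Fin 4) :=
  (WithLp.linearEquiv 2 ℝ (Fin 4 → ℝ)).symm.toLinearMap.comp
    ((LinearMap.funLeft ℝ ℝ emb).comp (WithLp.linearEquiv 2 ℝ (Fin 7 → ℝ)).toLinearMap)

lemma inner_vec7 (x y : Fin 7 → ℝ) : (inner ℝ (vec7 x) (vec7 y) : ℝ) =
    x 0 * y 0 + x 1 * y 1 + x 2 * y 2 + x 3 * y 3 + x 4 * y 4 + x 5 * y 5 + x 6 * y 6 := by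
  rw [PiLp.inner_apply, Fin.sum_univ_seven]
  simp only [RCLike.inner_apply', conj_trivial]
  rfl

lemma poly4_zero {c0 c1 c2 c3 c4 : ℝ} {s : Set ℝ} (hs : s.Infinite)
    (h : ∀ t ∈ s, c0 + c1*t + c2*t^2 + c3*t^3 + c4*t^4 = 0) :
    c0 = 0 ∧ c1 = 0 ∧ c2 = 0 ∧ c3 = 0 ∧ c4 = 0 := by
  have hP : (Polynomial.C c0 + Polynomial.C c1 * Polynomial.X + Polynomial.C c2 * Polynomial.X^2
      + Polynomial.C c3 * Polynomial.X^3 + Polynomial.C c4 * Polynomial.X^4 : Polynomial ℝ) = 0 := by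
    apply Polynomial.eq_zero_of_infinite_isRoot
    apply hs.mono
    intro t ht
    simp only [Set.mem_setOf_eq, Polynomial.IsRoot, Polynomial.eval_add, Polynomial.eval_mul,
      Polynomial.eval_pow, Polynomial.eval_C, Polynomial.eval_X]
    linarith [h t ht]
  refine ⟨?_, ?_, ?_, ?_, ?_⟩
  · have := congrArg (fun P => Polynomial.coeff P 0) hP; simpa using this
  · have := congrArg (fun P => Polynomial.coeff P 1) hP; simpa using this
  · have := congrArg (fun P => Polynomial.coeff P 2) hP; simpa using this
  · have := congrArg (fun P => Polynomial.coeff P 3) hP; simpa using this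
  · have := congrArg (fun P => Polynomial.coeff P 4) hP; simpa using this

lemma deriv_congr_of_mem' {F G : ℝ → ℝ} {s : Set ℝ} (hs : IsOpen s) (h : ∀ x ∈ s, F x = G x)
    {x : ℝ} (hx : x ∈ s) : deriv F x = deriv G x :=
  Filter.EventuallyEq.deriv_eq (Filter.eventuallyEq_of_mem (hs.mem_nhds hx) h)

lemma exists_annihilator (V : ℝ → EuclideanSpace ℝ (Fin 4)) (s : Set ℝ)
    (hrank : Module.finrank ℝ (Submodule.span ℝ (V '' s)) ≤ 3) :
    ∃ d : EuclideanSpace ℝ (Fin 4), d ≠ 0 ∧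
      ∀ x ∈ s, V x 0 * d 0 + V x 1 * d 1 + V x 2 * d 2 + V x 3 * d 3 = 0 := by
  set S4 := Submodule.span ℝ (V '' s) with hS4
  have hne : S4 ≠ ⊤ := by
    intro h
    rw [h] at hrank
    rw [finrank_top, finrank_euclideanSpace] at hrank
    simp at hrank
  have hbot : S4ᗮ ≠ ⊥ := by rwa [Ne, Submodule.orthogonal_eq_bot_iff]
  obtain ⟨d, hd, hdne⟩ := (Submodule.ne_bot_iff _).mp hbot
  refine ⟨d, hdne, fun x hx => ?_⟩
  have hmem : V x ∈ S4 := Submodule.subset_span (Set.mem_image_of_mem _ hx)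
  have := (Submodule.mem_orthogonal S4 d).mp hd (V x) hmem
  rw [PiLp.inner_apply, Fin.sum_univ_four] at this
  simp [RCLike.inner_apply] at this
  linarith

lemma injOn_of_deriv_ne_zero {F : ℝ → ℝ} {c d : ℝ}
    (hdiff : ∀ x ∈ Set.Ioo c d, DifferentiableAt ℝ F x)
    (hne : ∀ x ∈ Set.Ioo c d, deriv F x ≠ 0) :
    Set.InjOn F (Set.Ioo c d) := by
  have hmain : ∀ x1 ∈ Set.Ioo c d, ∀ x2 ∈ Set.Ioo c d, x1 < x2 → F x1 ≠ F x2 := by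
    intro x1 h1 x2 h2 hlt heq
    have hsub : Set.Icc x1 x2 ⊆ Set.Ioo c d := fun x hx =>
      ⟨lt_of_lt_of_le h1.1 hx.1, lt_of_le_of_lt hx.2 h2.2⟩
    have hcont : ContinuousOn F (Set.Icc x1 x2) := fun x hx =>
      ((hdiff x (hsub hx)).continuousAt).continuousWithinAt
    obtain ⟨cc, hcc, h0⟩ := exists_deriv_eq_zero hlt hcont heq
    exact hne cc (hsub ⟨le_of_lt hcc.1, le_of_lt hcc.2⟩) h0
  intro x1 h1 x2 h2 heq
  rcases lt_trichotomy x1 x2 with h|h|h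
  · exact absurd heq (hmain x1 h1 x2 h2 h)
  · exact h
  · exact absurd heq.symm (hmain x2 h2 x1 h1 h)

noncomputable def psiV (f : ℝ → ℝ) (y : ℝ) : EuclideanSpace ℝ (Fin 7) :=
  vec7 ![1, f y^2, (f y^2)^2, deriv f y^2, (deriv f y^2)^2, f y^2 * deriv f y^2,
    f y * deriv (deriv f) y]

noncomputable def lamV (K : ℝ) (g : ℝ → ℝ) (z : ℝ) : EuclideanSpace ℝ (Fin 7) :=
  vec7 ![K, 2*K*deriv g z^2, K*(deriv g z^2)^2, -(deriv g z^2) - 2*K*g z^2, K*(g z^2)^2,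
    -2*K*(deriv g z^2)*g z^2, g z * deriv (deriv g) z]

lemma key (K : ℝ) (hK : K ≠ 0) (a₁ b₁ a₂ b₂ : ℝ) (f g : ℝ → ℝ)
    (h₁ : a₁ < b₁) (h₂ : a₂ < b₂)
    (hf : ContDiffOn ℝ (⊤ : ℕ∞) f (Set.Ioo a₁ b₁)) (hg : ContDiffOn ℝ (⊤ : ℕ∞) g (Set.Ioo a₂ b₂))
    (hfg : ∀ y ∈ Set.Ioo a₁ b₁, ∀ z ∈ Set.Ioo a₂ b₂,
      (1 + f y ^ 2 * deriv g z ^ 2 - deriv f y ^ 2 * g z ^ 2 < 0) ∧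
      (f y * g z * deriv (deriv f) y * deriv (deriv g) z
          - deriv f y ^ 2 * deriv g z ^ 2 =
        -K * (1 + f y ^ 2 * deriv g z ^ 2 - deriv f y ^ 2 * g z ^ 2) ^ 2)) : False := by
  have hIo : IsOpen (Set.Ioo a₁ b₁) := isOpen_Ioo
  have hJo : IsOpen (Set.Ioo a₂ b₂) := isOpen_Ioo
  have hfd : ∀ y ∈ Set.Ioo a₁ b₁, DifferentiableAt ℝ f y := fun y hy =>
    (hf.differentiableOn (by simp)).differentiableAt (hIo.mem_nhds hy)
  have hf1 : ContDiffOn ℝ (⊤ : ℕ∞) (deriv f) (Set.Ioo a₁ b₁) := hf.deriv_of_isOpen hIo (by simp)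
  have hf1d : ∀ y ∈ Set.Ioo a₁ b₁, DifferentiableAt ℝ (deriv f) y := fun y hy =>
    (hf1.differentiableOn (by simp)).differentiableAt (hIo.mem_nhds hy)
  have hgd : ∀ z ∈ Set.Ioo a₂ b₂, DifferentiableAt ℝ g z := fun z hz =>
    (hg.differentiableOn (by simp)).differentiableAt (hJo.mem_nhds hz)
  have hg1 : ContDiffOn ℝ (⊤ : ℕ∞) (deriv g) (Set.Ioo a₂ b₂) := hg.deriv_of_isOpen hJo (by simp)
  have hg1d : ∀ z ∈ Set.Ioo a₂ b₂, DifferentiableAt ℝ (deriv g) z := fun z hz =>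
    (hg1.differentiableOn (by simp)).differentiableAt (hJo.mem_nhds hz)
  have hy₀ : (a₁+b₁)/2 ∈ Set.Ioo a₁ b₁ := ⟨by linarith, by linarith⟩
  have hz₀ : (a₂+b₂)/2 ∈ Set.Ioo a₂ b₂ := ⟨by linarith, by linarith⟩
  set y₀ := (a₁+b₁)/2
  set z₀ := (a₂+b₂)/2
  have hfp : ∀ y ∈ Set.Ioo a₁ b₁, deriv f y ≠ 0 := by
    intro y hy h0
    have hW := (hfg y hy z₀ hz₀).1
    rw [h0] at hW
    nlinarith [mul_nonneg (sq_nonneg (f y)) (sq_nonneg (deriv g z₀))]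
  have hgn : ∀ z ∈ Set.Ioo a₂ b₂, g z ≠ 0 := by
    intro z hz h0
    have hW := (hfg y₀ hy₀ z hz).1
    rw [h0] at hW
    nlinarith [mul_nonneg (sq_nonneg (f y₀)) (sq_nonneg (deriv g z))]
  have hfstar : ∃ y ∈ Set.Ioo a₁ b₁, f y ≠ 0 := by
    by_contra hcon
    push_neg at hcon
    have hp1 : a₁ + (b₁-a₁)/3 ∈ Set.Ioo a₁ b₁ := ⟨by linarith, by linarith⟩
    have hp2 : a₁ + 2*(b₁-a₁)/3 ∈ Set.Ioo a₁ b₁ := ⟨by linarith, by linarith⟩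
    have hlt : a₁ + (b₁-a₁)/3 < a₁ + 2*(b₁-a₁)/3 := by linarith
    have hsub : Set.Icc (a₁ + (b₁-a₁)/3) (a₁ + 2*(b₁-a₁)/3) ⊆ Set.Ioo a₁ b₁ := fun x hx =>
      ⟨by have := hx.1; linarith, by have := hx.2; linarith⟩
    have hcont : ContinuousOn f (Set.Icc (a₁ + (b₁-a₁)/3) (a₁ + 2*(b₁-a₁)/3)) := fun x hx =>
      ((hfd x (hsub hx)).continuousAt).continuousWithinAt
    obtain ⟨c, hc, h0⟩ := exists_deriv_eq_zero hlt hcont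
      (by rw [hcon _ hp1, hcon _ hp2])
    exact hfp c (hsub ⟨le_of_lt hc.1, le_of_lt hc.2⟩) h0
  have hgstar : ∃ z ∈ Set.Ioo a₂ b₂, deriv g z ≠ 0 := by
    by_contra hcon
    push_neg at hcon
    have hdd : deriv (deriv g) z₀ = 0 := by
      have : deriv (deriv g) z₀ = deriv (fun _ => (0:ℝ)) z₀ :=
        deriv_congr_of_mem' hJo hcon hz₀
      simpa using this
    have hW := (hfg y₀ hy₀ z₀ hz₀).1
    have hE := (hfg y₀ hy₀ z₀ hz₀).2
    rw [hcon z₀ hz₀] at hE hW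
    rw [hdd] at hE
    have hWne : (1 + f y₀ ^ 2 * (0:ℝ) ^ 2 - deriv f y₀ ^ 2 * g z₀ ^ 2) ≠ 0 := ne_of_lt hW
    have : -K * (1 + f y₀ ^ 2 * (0:ℝ) ^ 2 - deriv f y₀ ^ 2 * g z₀ ^ 2) ^ 2 ≠ 0 :=
      mul_ne_zero (neg_ne_zero.mpr hK) (pow_ne_zero _ hWne)
    apply this
    rw [← hE]; ring
  -- subinterval where f ≠ 0
  obtain ⟨ys, hys, hfys⟩ := hfstar
  have hnhds1 : {y | f y ≠ 0} ∩ Set.Ioo a₁ b₁ ∈ nhds ys := by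
    apply Filter.inter_mem
    · exact (hfd ys hys).continuousAt.eventually_ne hfys
    · exact hIo.mem_nhds hys
  obtain ⟨ε₁, hε₁, hball1⟩ := Metric.mem_nhds_iff.mp hnhds1
  have hI₀sub : Set.Ioo (ys - ε₁) (ys + ε₁) ⊆ {y | f y ≠ 0} ∩ Set.Ioo a₁ b₁ := by
    rw [← Real.ball_eq_Ioo]; exact hball1
  set c₁ := ys - ε₁
  set d₁ := ys + ε₁
  have hc₁d₁ : c₁ < d₁ := by simp only [c₁, d₁]; linarith
  have hI₀I : Set.Ioo c₁ d₁ ⊆ Set.Ioo a₁ b₁ := fun x hx => (hI₀sub hx).2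
  have hfne : ∀ y ∈ Set.Ioo c₁ d₁, f y ≠ 0 := fun y hy => (hI₀sub hy).1
  -- subinterval where g' ≠ 0
  obtain ⟨zs, hzs, hgzs⟩ := hgstar
  have hnhds2 : {z | deriv g z ≠ 0} ∩ Set.Ioo a₂ b₂ ∈ nhds zs := by
    apply Filter.inter_mem
    · exact (hg1d zs hzs).continuousAt.eventually_ne hgzs
    · exact hJo.mem_nhds hzs
  obtain ⟨ε₂, hε₂, hball2⟩ := Metric.mem_nhds_iff.mp hnhds2
  have hJ₀sub : Set.Ioo (zs - ε₂) (zs + ε₂) ⊆ {z | deriv g z ≠ 0} ∩ Set.Ioo a₂ b₂ := by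
    rw [← Real.ball_eq_Ioo]; exact hball2
  set c₂ := zs - ε₂
  set d₂ := zs + ε₂
  have hc₂d₂ : c₂ < d₂ := by simp only [c₂, d₂]; linarith
  have hJ₀J : Set.Ioo c₂ d₂ ⊆ Set.Ioo a₂ b₂ := fun x hx => (hJ₀sub hx).2
  have hg1ne : ∀ z ∈ Set.Ioo c₂ d₂, deriv g z ≠ 0 := fun z hz => (hJ₀sub hz).1
  -- midpoints
  have hym : (c₁+d₁)/2 ∈ Set.Ioo c₁ d₁ := ⟨by linarith, by linarith⟩
  have hzm : (c₂+d₂)/2 ∈ Set.Ioo c₂ d₂ := ⟨by linarith, by linarith⟩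
  set ym := (c₁+d₁)/2
  set zm := (c₂+d₂)/2
  -- infinite images of u = f² and v = g²
  have hIooI₀ : (Set.Ioo c₁ d₁).Infinite := Set.infinite_coe_iff.mp (Set.Ioo.infinite hc₁d₁)
  have hIooJ₀ : (Set.Ioo c₂ d₂).Infinite := Set.infinite_coe_iff.mp (Set.Ioo.infinite hc₂d₂)
  have hudiff : ∀ x ∈ Set.Ioo c₁ d₁, DifferentiableAt ℝ (fun y => f y ^ 2) x := fun x hx =>
    (hfd x (hI₀I hx)).pow 2
  have huderiv : ∀ x ∈ Set.Ioo c₁ d₁, deriv (fun y => f y ^ 2) x = 2 * f x * deriv f x := by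
    intro x hx
    have h := ((hfd x (hI₀I hx)).hasDerivAt.pow 2).deriv
    rw [show (fun y => f y ^ 2) = f ^ 2 from rfl, h]; norm_num
  have huinj : Set.InjOn (fun y => f y ^ 2) (Set.Ioo c₁ d₁) := by
    apply injOn_of_deriv_ne_zero hudiff
    intro x hx
    rw [huderiv x hx]
    exact mul_ne_zero (mul_ne_zero two_ne_zero (hfne x hx)) (hfp x (hI₀I hx))
  have hsu : ((fun y => f y ^ 2) '' Set.Ioo c₁ d₁).Infinite := hIooI₀.image huinj
  have hvdiff : ∀ x ∈ Set.Ioo c₂ d₂, DifferentiableAt ℝ (fun z => g z ^ 2) x := fun x hx =>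
    (hgd x (hJ₀J hx)).pow 2
  have hvderiv : ∀ x ∈ Set.Ioo c₂ d₂, deriv (fun z => g z ^ 2) x = 2 * g x * deriv g x := by
    intro x hx
    have h := ((hgd x (hJ₀J hx)).hasDerivAt.pow 2).deriv
    rw [show (fun z => g z ^ 2) = g ^ 2 from rfl, h]; norm_num
  have hvinj : Set.InjOn (fun z => g z ^ 2) (Set.Ioo c₂ d₂) := by
    apply injOn_of_deriv_ne_zero hvdiff
    intro x hx
    rw [hvderiv x hx]
    exact mul_ne_zero (mul_ne_zero two_ne_zero (hgn x (hJ₀J hx))) (hg1ne x hx)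
  have hsv : ((fun z => g z ^ 2) '' Set.Ioo c₂ d₂).Infinite := hIooJ₀.image hvinj
  -- orthogonality
  have horth : ∀ y ∈ Set.Ioo c₁ d₁, ∀ z ∈ Set.Ioo c₂ d₂,
      (inner ℝ (psiV f y) (lamV K g z) : ℝ) = 0 := by
    intro y hy z hz
    have hE := (hfg y (hI₀I hy) z (hJ₀J hz)).2
    simp only [psiV, lamV]
    rw [inner_vec7]
    show (1:ℝ) * K + f y^2 * (2*K*deriv g z^2) + (f y^2)^2 * (K*(deriv g z^2)^2)
      + deriv f y^2 * (-(deriv g z^2) - 2*K*g z^2) + (deriv f y^2)^2 * (K*(g z^2)^2)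
      + (f y^2 * deriv f y^2) * (-2*K*(deriv g z^2)*g z^2)
      + (f y * deriv (deriv f) y) * (g z * deriv (deriv g) z) = 0
    linear_combination hE
  set S : Submodule ℝ (EuclideanSpace ℝ (Fin 7)) :=
    Submodule.span ℝ (psiV f '' Set.Ioo c₁ d₁) with hSdef
  set T : Submodule ℝ (EuclideanSpace ℝ (Fin 7)) :=
    Submodule.span ℝ (lamV K g '' Set.Ioo c₂ d₂) with hTdef
  have hTS : T ≤ Sᗮ := by
    rw [hTdef, Submodule.span_le]
    rintro x ⟨z, hz, rfl⟩
    rw [SetLike.mem_coe, Submodule.mem_orthogonal]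
    intro u hu
    rw [hSdef] at hu
    induction hu using Submodule.span_induction with
    | mem w hw => obtain ⟨y, hy, rfl⟩ := hw; exact horth y hy z hz
    | zero => simp
    | add w₁ w₂ hw1 hw2 h1 h2 => rw [inner_add_left, h1, h2]; simp
    | smul r w hw hws => rw [inner_smul_left, hws]; simp
  have hdim : Module.finrank ℝ S + Module.finrank ℝ T ≤ 7 := by
    have h1 := Submodule.finrank_add_finrank_orthogonal S
    rw [finrank_euclideanSpace] at h1
    simp only [Fintype.card_fin] at h1
    have h2 : Module.finrank ℝ T ≤ Module.finrank ℝ Sᗮ := Submodule.finrank_mono hTS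
    omega
  have hsplit : Module.finrank ℝ S ≤ 3 ∨ Module.finrank ℝ T ≤ 3 := by omega
  rcases hsplit with hS3 | hT3
  · -- f-side relation
    have hrank4 : Module.finrank ℝ (Submodule.span ℝ
        ((fun y => proj47 ![0,1,2,3] (psiV f y)) '' Set.Ioo c₁ d₁)) ≤ 3 := by
      have hmap : Submodule.map (proj47 ![0,1,2,3]) S
          = Submodule.span ℝ ((fun y => proj47 ![0,1,2,3] (psiV f y)) '' Set.Ioo c₁ d₁) := by
        rw [hSdef, Submodule.map_span, Set.image_image]
      rw [← hmap]
      exact le_trans (Submodule.finrank_map_le _ _) hS3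
    obtain ⟨dv, hdvne, hdv⟩ := exists_annihilator _ _ hrank4
    have hrel : ∀ y ∈ Set.Ioo c₁ d₁,
        (1:ℝ) * dv 0 + f y^2 * dv 1 + (f y^2)^2 * dv 2 + deriv f y^2 * dv 3 = 0 := by
      intro y hy
      exact hdv y hy
    by_cases hd3 : dv 3 = 0
    · obtain ⟨h0, h1, h2, _, _⟩ := poly4_zero (c0 := dv 0) (c1 := dv 1) (c2 := dv 2)
        (c3 := 0) (c4 := 0) hsu (by
          rintro t ⟨y, hy, rfl⟩
          have h := hrel y hy
          rw [hd3] at h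
          linear_combination h)
      apply hdvne
      ext j
      fin_cases j
      · exact h0
      · exact h1
      · exact h2
      · exact hd3
    · set α := -(dv 0/dv 3) with hα
      set β := -(dv 1/dv 3) with hβ
      set γ := -(dv 2/dv 3) with hγdef
      have hpu : ∀ y ∈ Set.Ioo c₁ d₁,
          deriv f y^2 = α + β*(f y^2) + γ*(f y^2)^2 := by
        intro y hy
        have h := hrel y hy
        rw [hα, hβ, hγdef]
        have h' : deriv f y ^ 2 * dv 3 = (-(dv 0/dv 3) + -(dv 1/dv 3)*(f y^2)
            + -(dv 2/dv 3)*(f y^2)^2) * dv 3 := by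
          field_simp
          linear_combination h
        exact mul_right_cancel₀ hd3 h'
      have hf2 : ∀ y ∈ Set.Ioo c₁ d₁,
          deriv (deriv f) y = (β + 2*γ*(f y^2)) * f y := by
        intro y hy
        have hL : HasDerivAt (fun w => deriv f w^2) (2 * deriv f y * deriv (deriv f) y) y := by
          have h := (hf1d y (hI₀I hy)).hasDerivAt.pow 2
          norm_num at h
          exact h
        have hb : HasDerivAt f (deriv f y) y := (hfd y (hI₀I hy)).hasDerivAt
        have h2 : HasDerivAt (fun w => f w^2) (2 * f y * deriv f y) y := by
          have h := hb.pow 2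
          norm_num at h
          exact h
        have h4 : HasDerivAt (fun w => (f w^2)^2) (2*(f y^2)*(2*f y*deriv f y)) y := by
          have h := h2.pow 2
          norm_num at h
          exact h
        have hR : HasDerivAt (fun w => α + β*(f w^2) + γ*(f w^2)^2)
            (β*(2*f y*deriv f y) + γ*(2*(f y^2)*(2*f y*deriv f y))) y :=
          ((h2.const_mul β).const_add α).add (h4.const_mul γ)
        have heq : deriv (fun w => deriv f w^2) y
            = deriv (fun w => α + β*(f w^2) + γ*(f w^2)^2) y :=
          deriv_congr_of_mem' isOpen_Ioo hpu hy
        rw [hL.deriv, hR.deriv] at heq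
        have hc : (2 * deriv f y) * deriv (deriv f) y
            = (2 * deriv f y) * ((β + 2*γ*(f y^2)) * f y) := by linear_combination heq
        exact mul_left_cancel₀ (mul_ne_zero two_ne_zero (hfp y (hI₀I hy))) hc
      have hcoefs : ∀ z ∈ Set.Ioo c₂ d₂,
          (K*(1-α*g z^2)^2 - α*deriv g z^2 = 0) ∧
          (K*((deriv g z^2-β*g z^2)^2 - 2*γ*g z^2*(1-α*g z^2))
            + 2*γ*(g z*deriv (deriv g) z) - γ*deriv g z^2 = 0) ∧
          (K*γ^2*(g z^2)^2 = 0) := by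
        intro z hz
        obtain ⟨h0, h1, h2, h3, h4⟩ := poly4_zero
          (c0 := K*(1-α*g z^2)^2 - α*deriv g z^2)
          (c1 := 2*K*(1-α*g z^2)*(deriv g z^2-β*g z^2)
            + β*(g z*deriv (deriv g) z) - β*deriv g z^2)
          (c2 := K*((deriv g z^2-β*g z^2)^2 - 2*γ*g z^2*(1-α*g z^2))
            + 2*γ*(g z*deriv (deriv g) z) - γ*deriv g z^2)
          (c3 := -(2*K*γ)*g z^2*(deriv g z^2-β*g z^2))
          (c4 := K*γ^2*(g z^2)^2)
          hsu (by
            rintro t ⟨y, hy, rfl⟩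
            have hE := (hfg y (hI₀I hy) z (hJ₀J hz)).2
            rw [hf2 y hy] at hE
            rw [hpu y hy] at hE
            linear_combination hE)
        exact ⟨h0, h2, h4⟩
      have hγ0 : γ = 0 := by
        have h4 := (hcoefs zm hzm).2.2
        rcases mul_eq_zero.mp h4 with h | h
        · rcases mul_eq_zero.mp h with h' | h'
          · exact absurd h' hK
          · exact pow_eq_zero_iff two_ne_zero |>.mp h'
        · exact absurd (pow_eq_zero_iff two_ne_zero |>.mp
            (pow_eq_zero_iff two_ne_zero |>.mp h)) (hgn zm (hJ₀J hzm))
      have hq : ∀ z ∈ Set.Ioo c₂ d₂, deriv g z^2 = β * g z^2 := by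
        intro z hz
        have h2 := (hcoefs z hz).2.1
        rw [hγ0] at h2
        have h2' : K * (deriv g z^2 - β*g z^2)^2 = 0 := by linear_combination h2
        rcases mul_eq_zero.mp h2' with h | h
        · exact absurd h hK
        · have := pow_eq_zero_iff two_ne_zero |>.mp h
          linarith [this]
      have hfin : ∀ t ∈ (fun z => g z ^ 2) '' Set.Ioo c₂ d₂,
          K + (-(2*K*α) - α*β)*t + (K*α^2)*t^2 + 0*t^3 + 0*t^4 = 0 := by
        rintro t ⟨z, hz, rfl⟩
        have h0 := (hcoefs z hz).1
        have hqz := hq z hz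
        linear_combination h0 + α * hqz
      exact hK (poly4_zero hsv hfin).1
  · -- g-side relation
    have hrank4 : Module.finrank ℝ (Submodule.span ℝ
        ((fun z => proj47 ![0,1,3,4] (lamV K g z)) '' Set.Ioo c₂ d₂)) ≤ 3 := by
      have hmap : Submodule.map (proj47 ![0,1,3,4]) T
          = Submodule.span ℝ ((fun z => proj47 ![0,1,3,4] (lamV K g z)) '' Set.Ioo c₂ d₂) := by
        rw [hTdef, Submodule.map_span, Set.image_image]
      rw [← hmap]
      exact le_trans (Submodule.finrank_map_le _ _) hT3
    obtain ⟨ev, hevne, hev⟩ := exists_annihilator _ _ hrank4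
    have hrel : ∀ z ∈ Set.Ioo c₂ d₂,
        K * ev 0 + (2*K*deriv g z^2) * ev 1 + (-(deriv g z^2) - 2*K*g z^2) * ev 2
          + (K*(g z^2)^2) * ev 3 = 0 := by
      intro z hz
      exact hev z hz
    set μ := 2*K*ev 1 - ev 2 with hμdef
    by_cases hμ : μ = 0
    · obtain ⟨h0, h1, h2, _, _⟩ := poly4_zero (c0 := K*ev 0) (c1 := -(2*K*ev 2))
        (c2 := K*ev 3) (c3 := 0) (c4 := 0) hsv (by
          rintro t ⟨z, hz, rfl⟩
          have h := hrel z hz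
          have hμ' : 2*K*ev 1 - ev 2 = 0 := by rw [← hμdef]; exact hμ
          linear_combination h - (deriv g z^2) * hμ')
      have he0 : ev 0 = 0 := by
        rcases mul_eq_zero.mp h0 with h | h
        · exact absurd h hK
        · exact h
      have he2 : ev 2 = 0 := by
        have : (2*K) * ev 2 = 0 := by linear_combination -h1
        rcases mul_eq_zero.mp this with h | h
        · exact absurd (by linarith : K = 0) hK
        · exact h
      have he3 : ev 3 = 0 := by
        rcases mul_eq_zero.mp h2 with h | h
        · exact absurd h hK
        · exact h
      have he1 : ev 1 = 0 := by
        have : 2*K*ev 1 = 0 := by rw [hμdef] at hμ; linarith [hμ, he2]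
        rcases mul_eq_zero.mp this with h | h
        · rcases mul_eq_zero.mp h with h' | h'
          · norm_num at h'
          · exact absurd h' hK
        · exact h
      apply hevne
      ext j
      fin_cases j
      · exact he0
      · exact he1
      · exact he2
      · exact he3
    · set a := -(K*ev 0)/μ with ha
      set b := 2*K*ev 2/μ with hb
      set c := -(K*ev 3)/μ with hc
      have hqv : ∀ z ∈ Set.Ioo c₂ d₂,
          deriv g z^2 = a + b*(g z^2) + c*(g z^2)^2 := by
        intro z hz
        have h := hrel z hz
        have hμ' : 2*K*ev 1 - ev 2 ≠ 0 := by rw [hμdef] at hμ; exact hμ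
        rw [ha, hb, hc, hμdef]
        have h' : deriv g z ^ 2 * (2*K*ev 1 - ev 2) = (-(K*ev 0)/(2*K*ev 1 - ev 2)
            + 2*K*ev 2/(2*K*ev 1 - ev 2)*(g z^2)
            + -(K*ev 3)/(2*K*ev 1 - ev 2)*(g z^2)^2) * (2*K*ev 1 - ev 2) := by
          field_simp
          linear_combination h
        exact mul_right_cancel₀ hμ' h'
      have hg2 : ∀ z ∈ Set.Ioo c₂ d₂,
          deriv (deriv g) z = (b + 2*c*(g z^2)) * g z := by
        intro z hz
        have hL : HasDerivAt (fun w => deriv g w^2) (2 * deriv g z * deriv (deriv g) z) z := by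
          have h := (hg1d z (hJ₀J hz)).hasDerivAt.pow 2
          norm_num at h
          exact h
        have hbd : HasDerivAt g (deriv g z) z := (hgd z (hJ₀J hz)).hasDerivAt
        have h2 : HasDerivAt (fun w => g w^2) (2 * g z * deriv g z) z := by
          have h := hbd.pow 2
          norm_num at h
          exact h
        have h4 : HasDerivAt (fun w => (g w^2)^2) (2*(g z^2)*(2*g z*deriv g z)) z := by
          have h := h2.pow 2
          norm_num at h
          exact h
        have hR : HasDerivAt (fun w => a + b*(g w^2) + c*(g w^2)^2)
            (b*(2*g z*deriv g z) + c*(2*(g z^2)*(2*g z*deriv g z))) z :=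
          ((h2.const_mul b).const_add a).add (h4.const_mul c)
        have heq : deriv (fun w => deriv g w^2) z
            = deriv (fun w => a + b*(g w^2) + c*(g w^2)^2) z :=
          deriv_congr_of_mem' isOpen_Ioo hqv hz
        rw [hL.deriv, hR.deriv] at heq
        have hcc : (2 * deriv g z) * deriv (deriv g) z
            = (2 * deriv g z) * ((b + 2*c*(g z^2)) * g z) := by linear_combination heq
        exact mul_left_cancel₀ (mul_ne_zero two_ne_zero (hg1ne z hz)) hcc
      have hcoefs : ∀ y ∈ Set.Ioo c₁ d₁,
          (-(deriv f y^2)*a + K*(1+f y^2*a)^2 = 0) ∧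
          (K*((f y^2*b-deriv f y^2)^2 + 2*(1+f y^2*a)*(f y^2*c))
            + 2*(f y*deriv (deriv f) y)*c - deriv f y^2*c = 0) ∧
          (K*(f y^2)^2*c^2 = 0) := by
        intro y hy
        obtain ⟨h0, h1, h2, h3, h4⟩ := poly4_zero
          (c0 := -(deriv f y^2)*a + K*(1+f y^2*a)^2)
          (c1 := (f y*deriv (deriv f) y)*b - deriv f y^2*b
            + 2*K*(1+f y^2*a)*(f y^2*b-deriv f y^2))
          (c2 := K*((f y^2*b-deriv f y^2)^2 + 2*(1+f y^2*a)*(f y^2*c))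
            + 2*(f y*deriv (deriv f) y)*c - deriv f y^2*c)
          (c3 := 2*K*(f y^2*b-deriv f y^2)*(f y^2*c))
          (c4 := K*(f y^2)^2*c^2)
          hsv (by
            rintro t ⟨z, hz, rfl⟩
            have hE := (hfg y (hI₀I hy) z (hJ₀J hz)).2
            rw [hg2 z hz] at hE
            rw [hqv z hz] at hE
            linear_combination hE)
        exact ⟨h0, h2, h4⟩
      have hc0 : c = 0 := by
        have h4 := (hcoefs ym hym).2.2
        rcases mul_eq_zero.mp h4 with h | h
        · rcases mul_eq_zero.mp h with h' | h'
          · exact absurd h' hK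
          · exact absurd (pow_eq_zero_iff two_ne_zero |>.mp
              (pow_eq_zero_iff two_ne_zero |>.mp h')) (hfne ym hym)
        · exact pow_eq_zero_iff two_ne_zero |>.mp h
      have hpb : ∀ y ∈ Set.Ioo c₁ d₁, deriv f y^2 = b * f y^2 := by
        intro y hy
        have h2 := (hcoefs y hy).2.1
        rw [hc0] at h2
        have h2' : K * (f y^2*b - deriv f y^2)^2 = 0 := by linear_combination h2
        rcases mul_eq_zero.mp h2' with h | h
        · exact absurd h hK
        · have := pow_eq_zero_iff two_ne_zero |>.mp h
          linarith [this]
      have hfin : ∀ t ∈ (fun y => f y ^ 2) '' Set.Ioo c₁ d₁,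
          K + (2*K*a - a*b)*t + (K*a^2)*t^2 + 0*t^3 + 0*t^4 = 0 := by
        rintro t ⟨y, hy, rfl⟩
        have h0 := (hcoefs y hy).1
        have hpy := hpb y hy
        linear_combination h0 + a * hpy
      exact hK (poly4_zero hsu hfin).1

/-- In Lorentz–Minkowski space there is no timelike homothetical surface
`x = f(y)·g(z)` with nonzero constant Gauss curvature `K`. -/
theorem no_lorentz_timelike_homothetical_nonzero_CGC (K : ℝ) (hK : K ≠ 0) :
    ¬ ∃ (a₁ b₁ a₂ b₂ : ℝ) (f g : ℝ → ℝ),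
        a₁ < b₁ ∧ a₂ < b₂ ∧
        ContDiffOn ℝ (⊤ : ℕ∞) f (Set.Ioo a₁ b₁) ∧ ContDiffOn ℝ (⊤ : ℕ∞) g (Set.Ioo a₂ b₂) ∧
        ∀ y ∈ Set.Ioo a₁ b₁, ∀ z ∈ Set.Ioo a₂ b₂,
          (1 + f y ^ 2 * deriv g z ^ 2 - deriv f y ^ 2 * g z ^ 2 < 0) ∧
          (f y * g z * deriv (deriv f) y * deriv (deriv g) z
              - deriv f y ^ 2 * deriv g z ^ 2 =
            -K * (1 + f y ^ 2 * deriv g z ^ 2 - deriv f y ^ 2 * g z ^ 2) ^ 2) := by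
  rintro ⟨a₁, b₁, a₂, b₂, f, g, h₁, h₂, hf, hg, hfg⟩
  exact key K hK a₁ b₁ a₂ b₂ f g h₁ h₂ hf hg hfg
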